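/- Let g, f be formal power series over ℚ with g(0) = 1 and f = X·q where q(0) = 1, let M be the Riordan matrix of (g, f), let f̄ = X·q̄ (q̄(0) = 1) be the compositional inverse of f. Let P₃ be the unique matrix with ∑_{j=0}^{n} M_{n,j}·(P₃)_{j,k} = M_{n+3,k} for all n, k, let the third production matrix of M be P̃̃ with entries P̃̃_{n,k} = (P₃)_{n,k+2}, and let T be the matrix produced by P̃̃, i.e. T_{0,k} = δ_{0,k} and T_{n+1,k} = ∑_j T_{n,j}·P̃̃_{j,k}. Let R be the Riordan matrix of the pair (q̄²/(g∘f̄), X·q̄³). Then T is the inverse of R: for all n, k, ∑_{j=0}^{n} T_{n,j}·R_{j,k} = δ_{n,k}. -/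

import Mathlib

open PowerSeries Finset

/-- The Riordan matrix of the pair `(g, f)`: entries `M n k = [Xⁿ] (g * fᵏ)`. -/
noncomputable def riordan (g f : PowerSeries ℚ) (n k : ℕ) : ℚ :=
  PowerSeries.coeff n (g * f ^ k)

/-- Substitution of the power series `a` (with zero constant term) into `f`,
i.e. the composite `f(a)`. -/
noncomputable def psSubst (a f : PowerSeries ℚ) : PowerSeries ℚ :=
  PowerSeries.mk fun n =>
    PowerSeries.coeff n
      (∑ i ∈ Finset.range (n + 1), PowerSeries.C (PowerSeries.coeff i f) * a ^ i)

lemma coeff_pow_eq_zero {a : PowerSeries ℚ} (ha : constantCoeff a = 0)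
    {n d : ℕ} (h : n < d) : coeff n (a ^ d) = 0 := by
  obtain ⟨c, rfl⟩ := X_dvd_iff.mpr ha
  rw [mul_pow, mul_comm, coeff_mul_X_pow']
  simp [Nat.not_le.mpr h]

lemma coeff_psSubst (a F : PowerSeries ℚ) (n : ℕ) :
    coeff n (psSubst a F) = ∑ i ∈ range (n + 1), coeff i F * coeff n (a ^ i) := by
  simp [psSubst, coeff_mk, coeff_C_mul]

lemma coeff_psSubst' {a : PowerSeries ℚ} (ha : constantCoeff a = 0) (F : PowerSeries ℚ)
    {n N : ℕ} (h : n < N) :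
    coeff n (psSubst a F) = ∑ i ∈ range N, coeff i F * coeff n (a ^ i) := by
  rw [coeff_psSubst]
  apply Finset.sum_subset (by intro i hi; simp only [mem_range] at *; omega)
  intro i _ hi
  simp only [mem_range] at hi
  rw [coeff_pow_eq_zero ha (by omega), mul_zero]

lemma constantCoeff_psSubst {a : PowerSeries ℚ} (_ha : constantCoeff a = 0)
    (F : PowerSeries ℚ) :
    constantCoeff (psSubst a F) = constantCoeff F := by
  have := coeff_psSubst a F 0
  simp only [coeff_zero_eq_constantCoeff] at *
  simpa using this

lemma psSubst_mul {a : PowerSeries ℚ} (ha : constantCoeff a = 0) (F G : PowerSeries ℚ) :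
    psSubst a (F * G) = psSubst a F * psSubst a G := by
  ext n
  set φ : ℕ × ℕ → ℚ := fun p => coeff p.1 F * coeff p.2 G * coeff n (a ^ (p.1 + p.2))
    with hφ
  have mid : coeff n (psSubst a F * psSubst a G)
      = ∑ u ∈ range (n+1), ∑ v ∈ range (n+1), φ (u, v) := by
    rw [coeff_mul]
    have : ∀ p ∈ antidiagonal n,
        coeff p.1 (psSubst a F) * coeff p.2 (psSubst a G)
        = ∑ u ∈ range (n+1), ∑ v ∈ range (n+1),
            (coeff u F * coeff p.1 (a ^ u)) * (coeff v G * coeff p.2 (a ^ v)) := by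
      intro p hp
      rw [HasAntidiagonal.mem_antidiagonal] at hp
      rw [coeff_psSubst' ha F (show p.1 < n+1 by omega),
          coeff_psSubst' ha G (show p.2 < n+1 by omega), sum_mul_sum]
    rw [Finset.sum_congr rfl this, Finset.sum_comm]
    refine Finset.sum_congr rfl fun u _ => ?_
    rw [Finset.sum_comm]
    refine Finset.sum_congr rfl fun v _ => ?_
    rw [hφ]
    simp only
    rw [pow_add, coeff_mul, Finset.mul_sum]
    refine Finset.sum_congr rfl fun p _ => ?_
    ring
  rw [mid, coeff_psSubst]
  set Tset := (range (n+1) ×ˢ range (n+1)).filter (fun p : ℕ×ℕ => p.1 + p.2 ≤ n) with hT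
  have lhs1 : ∑ i ∈ range (n + 1), coeff i (F * G) * coeff n (a ^ i)
      = ∑ i ∈ range (n+1), ∑ p ∈ Tset.filter (fun p => p.1 + p.2 = i), φ p := by
    refine Finset.sum_congr rfl fun i hi => ?_
    rw [mem_range] at hi
    have hanti : Tset.filter (fun p : ℕ×ℕ => p.1 + p.2 = i) = antidiagonal i := by
      ext p
      simp only [hT, mem_filter, mem_product, mem_range, HasAntidiagonal.mem_antidiagonal]
      omega
    rw [hanti, coeff_mul, Finset.sum_mul]
    refine Finset.sum_congr rfl fun p hp => ?_
    rw [HasAntidiagonal.mem_antidiagonal] at hp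
    rw [hφ]; simp only [hp]
  rw [lhs1, Finset.sum_fiberwise_of_maps_to (fun p hp => by
      simp only [hT, mem_filter, mem_product, mem_range] at hp ⊢; omega) φ]
  rw [Finset.sum_subset (Finset.filter_subset _ _) (fun p hp hnp => by
      simp only [hT, mem_filter, mem_product, mem_range, not_and, not_le] at hp hnp
      have : n < p.1 + p.2 := hnp hp
      rw [hφ]; simp only [coeff_pow_eq_zero ha this, mul_zero])]
  rw [Finset.sum_product]

lemma psSubst_one (a : PowerSeries ℚ) : psSubst a 1 = 1 := by
  ext n
  rw [coeff_psSubst]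
  rw [Finset.sum_eq_single 0 (fun i _ hi => by simp [coeff_one, hi]) (by simp)]
  simp

lemma psSubst_pow {a : PowerSeries ℚ} (ha : constantCoeff a = 0) (F : PowerSeries ℚ)
    (k : ℕ) : psSubst a (F ^ k) = (psSubst a F) ^ k := by
  induction k with
  | zero => simpa using psSubst_one a
  | succ k ih => rw [pow_succ, pow_succ, psSubst_mul ha, ih]

lemma psSubst_X {a : PowerSeries ℚ} (ha : constantCoeff a = 0) : psSubst a X = a := by
  ext n
  rw [coeff_psSubst]
  rcases Nat.eq_zero_or_pos n with rfl | hn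
  · simpa [coeff_X] using ha.symm
  · rw [Finset.sum_eq_single 1 (fun i _ hi => by
      rcases i with _ | _ | i <;> simp_all [coeff_X]) (by simp; omega)]
    simp [coeff_X]

lemma psSubst_X_self (F : PowerSeries ℚ) : psSubst X F = F := by
  ext n
  rw [coeff_psSubst]
  rw [Finset.sum_eq_single n (fun i _ hi => by
    rw [coeff_X_pow, if_neg (fun h => hi h.symm), mul_zero]) (by simp)]
  simp [coeff_X_pow]

lemma psSubst_assoc {a b : PowerSeries ℚ} (ha : constantCoeff a = 0)
    (hb : constantCoeff b = 0) (F : PowerSeries ℚ) :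
    psSubst a (psSubst b F) = psSubst (psSubst a b) F := by
  ext n
  rw [coeff_psSubst, coeff_psSubst]
  have : ∀ j ∈ range (n+1), coeff j (psSubst b F) * coeff n (a ^ j)
      = ∑ i ∈ range (n+1), coeff i F * (coeff j (b ^ i) * coeff n (a ^ j)) := by
    intro j hj
    rw [mem_range] at hj
    rw [coeff_psSubst' hb F (show j < n+1 by omega), Finset.sum_mul]
    exact Finset.sum_congr rfl fun i _ => by ring
  rw [Finset.sum_congr rfl this, Finset.sum_comm]
  refine Finset.sum_congr rfl fun i _ => ?_
  rw [← Finset.mul_sum]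
  congr 1
  rw [← psSubst_pow ha, coeff_psSubst]

lemma coeff_mul_psSubst {a : PowerSeries ℚ} (ha : constantCoeff a = 0)
    (F G : PowerSeries ℚ) (N : ℕ) :
    coeff N (F * psSubst a G)
      = ∑ j ∈ range (N + 1), coeff N (F * a ^ j) * coeff j G := by
  rw [coeff_mul]
  have : ∀ p ∈ antidiagonal N, coeff p.1 F * coeff p.2 (psSubst a G)
      = ∑ j ∈ range (N+1), coeff j G * (coeff p.1 F * coeff p.2 (a ^ j)) := by
    intro p hp
    rw [HasAntidiagonal.mem_antidiagonal] at hp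
    rw [coeff_psSubst' ha G (show p.2 < N+1 by omega), Finset.mul_sum]
    exact Finset.sum_congr rfl fun j _ => by ring
  rw [Finset.sum_congr rfl this, Finset.sum_comm]
  refine Finset.sum_congr rfl fun j _ => ?_
  rw [coeff_mul, Finset.sum_mul]
  exact Finset.sum_congr rfl fun p _ => by ring

lemma coeff_psSubst_sub {u v : PowerSeries ℚ} (hu : constantCoeff u = 0)
    (hv : constantCoeff v = 0) (f : PowerSeries ℚ) {m : ℕ} (hm : 1 ≤ m)
    (hagree : ∀ i, i < m → coeff i u = coeff i v) :
    coeff m (psSubst u f) - coeff m (psSubst v f)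
      = coeff 1 f * (coeff m u - coeff m v) := by
  rw [coeff_psSubst, coeff_psSubst, ← Finset.sum_sub_distrib]
  have : ∀ i ∈ range (m+1), coeff i f * coeff m (u ^ i) - coeff i f * coeff m (v ^ i)
      = coeff i f * (coeff m (u ^ i) - coeff m (v ^ i)) := fun i _ => by ring
  rw [Finset.sum_congr rfl this]
  rw [Finset.sum_eq_single 1 ?side ?out]
  · simp
  · intro i _ hi
    rcases Nat.lt_or_ge i 2 with h2 | h2
    · interval_cases i
      · simp
      · exact absurd rfl hi
    · have key : coeff m (u ^ i) - coeff m (v ^ i) = 0 := by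
        rw [← map_sub, ← geom_sum₂_mul u v i, coeff_mul]
        refine Finset.sum_eq_zero fun p hp => ?_
        rw [HasAntidiagonal.mem_antidiagonal] at hp
        rcases Nat.lt_or_ge p.2 m with hlt | hge
        · rw [map_sub, hagree p.2 hlt, sub_self, mul_zero]
        · have hp2 : p.2 = m := by omega
          have hp1 : p.1 = 0 := by omega
          rw [hp1, coeff_zero_eq_constantCoeff, map_sum]
          have : ∀ t ∈ range i, constantCoeff (u ^ t * v ^ (i - 1 - t)) = 0 := by
            intro t ht
            rw [map_mul, map_pow, map_pow, hu, hv]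
            rcases Nat.eq_zero_or_pos t with rfl | htpos
            · have : i - 1 - 0 ≠ 0 := by omega
              rw [zero_pow this, mul_zero]
            · rw [zero_pow (by omega), zero_mul]
          rw [Finset.sum_eq_zero this, zero_mul]
      rw [key, mul_zero]
  · intro h
    simp only [mem_range] at h
    omega

lemma tri_solve (Mm : ℕ → ℕ → ℚ) (u v : ℕ → ℚ) (hdiag : ∀ n, Mm n n = 1)
    (hsum : ∀ n, ∑ m ∈ range (n+1), Mm n m * u m = ∑ m ∈ range (n+1), Mm n m * v m) :
    ∀ n, u n = v n := by
  intro n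
  induction n using Nat.strong_induction_on with
  | _ n ih =>
    have h0 := hsum n
    rw [Finset.sum_range_succ, Finset.sum_range_succ, hdiag] at h0
    have heq : ∑ m ∈ range n, Mm n m * u m = ∑ m ∈ range n, Mm n m * v m := by
      refine Finset.sum_congr rfl fun m hm => ?_
      rw [mem_range] at hm
      rw [ih m hm]
    rw [heq] at h0
    have := add_left_cancel h0
    simpa using this

lemma riordan_tri (g' u : PowerSeries ℚ) {n k : ℕ} (h : n < k) :
    riordan g' (X * u) n k = 0 := by
  unfold riordan
  rw [mul_pow, show g' * (X ^ k * u ^ k) = g' * u ^ k * X ^ k by ring, coeff_mul_X_pow']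
  simp [Nat.not_le.mpr h]

lemma riordan_diag (g' u : PowerSeries ℚ) (n : ℕ) :
    riordan g' (X * u) n n
      = constantCoeff g' * (constantCoeff u) ^ n := by
  unfold riordan
  rw [mul_pow, show g' * (X ^ n * u ^ n) = g' * u ^ n * X ^ n by ring, coeff_mul_X_pow']
  simp [coeff_zero_eq_constantCoeff]

theorem third_production_matrix_generates
    (g q qbar : PowerSeries ℚ)
    (hg : constantCoeff g = 1) (hq : constantCoeff q = 1)
    (hqbar : constantCoeff qbar = 1)
    (hcomp : psSubst (X * qbar) (X * q) = X)
    (P3 T : ℕ → ℕ → ℚ)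
    (hP3 : ∀ n k, ∑ j ∈ range (n + 1), riordan g (X * q) n j * P3 j k
          = riordan g (X * q) (n + 3) k)
    (hT0 : ∀ k, T 0 k = if k = 0 then 1 else 0)
    (hT : ∀ n k, T (n + 1) k = ∑ j ∈ range (n + 2), T n j * P3 j (k + 2)) :
    ∀ n k, ∑ j ∈ range (n + 1),
        T n j * riordan (qbar ^ 2 * (psSubst (X * qbar) g)⁻¹) (X * qbar ^ 3) j k
      = if n = k then 1 else 0 := by
  have hfc : constantCoeff (X * q) = 0 := by simp
  have hfbc : constantCoeff (X * qbar) = 0 := by simp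
  -- the composite the other way round
  have hwc : constantCoeff (psSubst (X * q) (X * qbar)) = 0 := by
    rw [constantCoeff_psSubst hfc]; exact hfbc
  have hsf : psSubst (psSubst (X * q) (X * qbar)) (X * q) = X * q := by
    rw [← psSubst_assoc hfc hfbc, hcomp, psSubst_X hfc]
  have hone : coeff 1 (X * q) = 1 := by
    rw [coeff_succ_X_mul, coeff_zero_eq_constantCoeff, hq]
  have hw : psSubst (X * q) (X * qbar) = X := by
    ext m
    induction m using Nat.strong_induction_on with
    | _ m ih =>
      rcases Nat.eq_zero_or_pos m with rfl | hm
      · simp [hwc]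
      · have hdiff := coeff_psSubst_sub hwc PowerSeries.constantCoeff_X (X * q) hm ih
        rw [hsf, psSubst_X_self, sub_self, hone, one_mul] at hdiff
        linarith [hdiff.symm]
  -- s := psSubst (X*q) qbar satisfies q * s = 1
  set s := psSubst (X * q) qbar with hsdef
  have hqs : q * s = 1 := by
    have h1 : psSubst (X * q) (X * qbar) = (X * q) * s := by
      rw [psSubst_mul hfc, psSubst_X hfc]
    rw [hw] at h1
    have h2 : X * (q * s) = X * 1 := by rw [mul_one]; linear_combination -h1
    exact mul_left_cancel₀ X_ne_zero h2
  have hsc : constantCoeff s = 1 := by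
    have := congrArg (constantCoeff) hqs
    rw [map_mul, hq, one_mul, map_one] at this
    exact this
  -- G := psSubst (X*qbar) g
  have hGc : constantCoeff (psSubst (X * qbar) g) = 1 := by
    rw [constantCoeff_psSubst hfbc, hg]
  have hGg : psSubst (X * q) (psSubst (X * qbar) g) = g := by
    rw [psSubst_assoc hfc hfbc, hw, psSubst_X_self]
  set Z := psSubst (X * q) ((psSubst (X * qbar) g)⁻¹) with hZdef
  have hgZ : g * Z = 1 := by
    have h1 : (psSubst (X * qbar) g) * (psSubst (X * qbar) g)⁻¹ = 1 :=
      PowerSeries.mul_inv_cancel _ (by rw [hGc]; exact one_ne_zero)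
    have h2 := congrArg (psSubst (X * q)) h1
    rw [psSubst_mul hfc, hGg, psSubst_one] at h2
    exact h2
  set h' := qbar ^ 2 * (psSubst (X * qbar) g)⁻¹ with hh'def
  have hh0 : constantCoeff h' = 1 := by
    rw [hh'def, map_mul, map_pow, hqbar, PowerSeries.constantCoeff_inv, hGc]
    norm_num
  -- substitution of f into h' and l
  have hsubl : psSubst (X * q) (X * qbar ^ 3) = (X * q) * s ^ 3 := by
    rw [psSubst_mul hfc, psSubst_X hfc, psSubst_pow hfc]
  have hsubh : psSubst (X * q) h' = s ^ 2 * Z := by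
    rw [hh'def, psSubst_mul hfc, psSubst_pow hfc]
  have hA : ∀ k, g * (X * q) ^ 2 * psSubst (X * q) (h' * (X * qbar ^ 3) ^ k)
      = X ^ (k + 2) * (s ^ 2) ^ k := by
    intro k
    rw [psSubst_mul hfc, psSubst_pow hfc, hsubl, hsubh]
    have e1 : (X * q) * s ^ 3 = X * s ^ 2 := by linear_combination (X * s^2) * hqs
    rw [e1, mul_pow X (s^2) k, pow_add X k 2]
    linear_combination (X^k * (s^2)^k * X^2 * q^2 * s^2) * hgZ
      + (X^k * (s^2)^k * X^2 * (q*s+1)) * hqs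
  have hA2 : ∀ k, g * psSubst (X * q) (h' * (X * qbar ^ 3) ^ k)
      = X ^ k * (s ^ 2) ^ (k + 1) := by
    intro k
    rw [psSubst_mul hfc, psSubst_pow hfc, hsubl, hsubh]
    have e1 : (X * q) * s ^ 3 = X * s ^ 2 := by linear_combination (X * s^2) * hqs
    rw [e1, mul_pow X (s^2) k, pow_succ (s^2) k]
    linear_combination (X^k * (s^2)^k * s^2) * hgZ
  -- matrix facts
  have Mdiag : ∀ n, riordan g (X * q) n n = 1 := fun n => by
    rw [riordan_diag, hg, hq, one_pow, one_mul]
  have Rdiag : ∀ n, riordan h' (X * qbar ^ 3) n n = 1 := fun n => by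
    rw [riordan_diag, hh0, map_pow, hqbar, one_pow, one_pow, one_mul]
  have P3tri : ∀ m c, m + 3 < c → P3 m c = 0 := by
    intro m
    induction m using Nat.strong_induction_on with
    | _ m ih =>
      intro c hc
      have h0 := hP3 m c
      rw [riordan_tri g q (show m + 3 < c from hc)] at h0
      rw [Finset.sum_range_succ, Mdiag m] at h0
      have hz : ∑ j ∈ range m, riordan g (X * q) m j * P3 j c = 0 :=
        Finset.sum_eq_zero fun j hj => by
          rw [mem_range] at hj
          rw [ih j hj c (by omega), mul_zero]
      rw [hz, zero_add, one_mul] at h0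
      exact h0
  have Ttri : ∀ n j, n < j → T n j = 0 := by
    intro n
    induction n with
    | zero => intro j hj; rw [hT0, if_neg (by omega)]
    | succ n ih =>
      intro j hj
      rw [hT]
      refine Finset.sum_eq_zero fun m hm => ?_
      rw [mem_range] at hm
      rcases Nat.lt_or_ge m (n + 1) with h | h
      · rw [P3tri m (j + 2) (by omega), mul_zero]
      · have hm' : m = n + 1 := by omega
        rw [hm', ih (n + 1) (by omega), zero_mul]
  have coeffXpow : ∀ (w : PowerSeries ℚ) (n j : ℕ),
      coeff (n + 3) (X ^ (j + 3) * w) = coeff n (X ^ j * w) := by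
    intro w n j
    rw [mul_comm, mul_comm (X ^ j) w, coeff_mul_X_pow', coeff_mul_X_pow']
    by_cases h : j ≤ n
    · rw [if_pos (by omega), if_pos h, show n + 3 - (j + 3) = n - j by omega]
    · rw [if_neg (by omega), if_neg h]
  have Mtri0 : ∀ N jj, N < jj → coeff N (g * (X * q) ^ jj) = 0 := by
    intro N jj hlt
    have := riordan_tri g q hlt
    simpa only [riordan] using this
  have hBL : ∀ n k, ∑ j ∈ range (n + 2),
      riordan g (X * q) (n + 3) (j + 2) * riordan h' (X * qbar ^ 3) j k
      = coeff (n + 3) (X ^ (k + 2) * (s ^ 2) ^ k) := by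
    intro n k
    have L := coeff_mul_psSubst hfc (g * (X * q) ^ 2) (h' * (X * qbar ^ 3) ^ k) (n + 3)
    rw [hA k] at L
    rw [L]
    simp only [riordan]
    have e : (∑ j ∈ range (n + 3 + 1),
        coeff (n+3) (g * (X * q) ^ 2 * (X * q) ^ j) * coeff j (h' * (X * qbar ^ 3) ^ k))
        = ∑ j ∈ range (n + 3 + 1),
        coeff (n+3) (g * (X * q) ^ (j + 2)) * coeff j (h' * (X * qbar ^ 3) ^ k) :=
      Finset.sum_congr rfl fun j _ => by
        rw [show g * (X * q) ^ 2 * (X * q) ^ j = g * (X * q) ^ (j + 2) by rw [pow_add]; ring]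
    rw [e]
    symm
    rw [show n + 3 + 1 = (n + 2) + 1 + 1 by omega, Finset.sum_range_succ,
      Finset.sum_range_succ]
    rw [Mtri0 (n+3) (n+3+2) (by omega), Mtri0 (n+3) (n+2+2) (by omega), zero_mul, zero_mul,
      add_zero, add_zero]
  have hBR : ∀ n k', ∑ m ∈ range (n + 1),
      riordan g (X * q) n m * riordan h' (X * qbar ^ 3) m k'
      = coeff n (X ^ k' * (s ^ 2) ^ (k' + 1)) := by
    intro n k'
    have L := coeff_mul_psSubst hfc g (h' * (X * qbar ^ 3) ^ k') n
    rw [hA2 k'] at L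
    rw [L]
    simp only [riordan]
  -- the heart identity
  have hswap : ∀ kk n, (∑ m ∈ range (n + 1), riordan g (X * q) n m *
      (∑ j ∈ range (m + 2), P3 m (j + 2) * riordan h' (X * qbar ^ 3) j kk))
      = coeff (n + 3) (X ^ (kk + 2) * (s ^ 2) ^ kk) := by
    intro kk n
    have step1 : ∀ m ∈ range (n + 1),
        riordan g (X * q) n m * (∑ j ∈ range (m + 2), P3 m (j + 2) * riordan h' (X * qbar ^ 3) j kk)
        = ∑ j ∈ range (n + 2), riordan g (X * q) n m * (P3 m (j + 2) * riordan h' (X * qbar ^ 3) j kk) := by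
      intro m hm
      rw [mem_range] at hm
      rw [Finset.mul_sum]
      apply Finset.sum_subset (by intro j hj; simp only [mem_range] at *; omega)
      intro j _ hj
      simp only [mem_range] at hj
      rw [P3tri m (j + 2) (by omega), zero_mul, mul_zero]
    rw [Finset.sum_congr rfl step1, Finset.sum_comm]
    have step2 : ∀ j ∈ range (n + 2),
        (∑ m ∈ range (n + 1), riordan g (X * q) n m * (P3 m (j + 2) * riordan h' (X * qbar ^ 3) j kk))
        = riordan g (X * q) (n + 3) (j + 2) * riordan h' (X * qbar ^ 3) j kk := by
      intro j _
      rw [← hP3 n (j + 2), Finset.sum_mul]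
      exact Finset.sum_congr rfl fun m _ => by ring
    rw [Finset.sum_congr rfl step2, hBL n kk]
  have heart0 : ∀ m, (∑ j ∈ range (m + 2), P3 m (j + 2) * riordan h' (X * qbar ^ 3) j 0)
      = 0 := by
    refine tri_solve (riordan g (X * q)) _ (fun _ => 0) Mdiag ?_
    intro n
    rw [hswap 0 n]
    have h2 : coeff (n + 3) ((X : PowerSeries ℚ) ^ (0 + 2) * (s ^ 2) ^ 0) = 0 := by
      rw [pow_zero, mul_one, coeff_X_pow, if_neg (by omega)]
    rw [h2]
    exact (Finset.sum_eq_zero fun m _ => by simp).symm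
  have heartS : ∀ k' m, (∑ j ∈ range (m + 2), P3 m (j + 2) * riordan h' (X * qbar ^ 3) j (k' + 1))
      = riordan h' (X * qbar ^ 3) m k' := by
    intro k'
    refine tri_solve (riordan g (X * q)) _ _ Mdiag ?_
    intro n
    rw [hswap (k' + 1) n, hBR n k', (by omega : k' + 1 + 2 = k' + 3)]
    exact coeffXpow ((s ^ 2) ^ (k' + 1)) n k'
  have shrink : ∀ kk m n, m < n + 1 →
      (∑ j ∈ range (n + 2), P3 m (j + 2) * riordan h' (X * qbar ^ 3) j kk)
      = ∑ j ∈ range (m + 2), P3 m (j + 2) * riordan h' (X * qbar ^ 3) j kk := by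
    intro kk m n hm
    symm
    apply Finset.sum_subset (by intro j hj; simp only [mem_range] at *; omega)
    intro j _ hj
    simp only [mem_range] at hj
    rw [P3tri m (j + 2) (by omega), zero_mul]
  -- main induction
  intro n
  induction n with
  | zero =>
    intro k
    rw [Finset.sum_range_one, hT0, if_pos rfl, one_mul]
    rcases k with _ | k'
    · rw [if_pos rfl, Rdiag 0]
    · rw [if_neg (by omega), riordan_tri h' (qbar ^ 3) (Nat.succ_pos k')]
  | succ n ih =>
    intro k
    have expand : ∀ j ∈ range (n + 2),
        T (n + 1) j * riordan h' (X * qbar ^ 3) j k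
        = ∑ m ∈ range (n + 2), T n m * (P3 m (j + 2) * riordan h' (X * qbar ^ 3) j k) := by
      intro j _
      rw [hT, Finset.sum_mul]
      exact Finset.sum_congr rfl fun m _ => by ring
    rw [Finset.sum_congr rfl expand, Finset.sum_comm, Finset.sum_range_succ]
    have last0 : (∑ j ∈ range (n + 2),
        T n (n + 1) * (P3 (n + 1) (j + 2) * riordan h' (X * qbar ^ 3) j k)) = 0 :=
      Finset.sum_eq_zero fun j _ => by rw [Ttri n (n + 1) (by omega), zero_mul]
    rw [last0, add_zero]
    have pull : ∀ m ∈ range (n + 1),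
        (∑ j ∈ range (n + 2), T n m * (P3 m (j + 2) * riordan h' (X * qbar ^ 3) j k))
        = T n m * ∑ j ∈ range (m + 2), P3 m (j + 2) * riordan h' (X * qbar ^ 3) j k := by
      intro m hm
      rw [mem_range] at hm
      rw [← Finset.mul_sum, shrink k m n hm]
    rw [Finset.sum_congr rfl pull]
    rcases k with _ | k'
    · rw [Finset.sum_eq_zero (fun m _ => by rw [heart0 m, mul_zero]), if_neg (by omega)]
    · have hstep : ∀ m ∈ range (n + 1),
          T n m * (∑ j ∈ range (m + 2), P3 m (j + 2) * riordan h' (X * qbar ^ 3) j (k' + 1))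
          = T n m * riordan h' (X * qbar ^ 3) m k' := fun m _ => by rw [heartS k' m]
      rw [Finset.sum_congr rfl hstep, ih k']
      by_cases hnk : n = k'
      · rw [if_pos hnk, if_pos (by omega)]
      · rw [if_neg hnk, if_neg (by omega)]
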